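/- arXiv:2011.08741 — 2 statements merged into one kernel-verified Lean document; each statement's English description precedes it below -/
import Mathlib

section
/- The determinant of the Jacobian of the SAIQH system at the disease-free equilibrium equals (𝒟 - 𝒩)μ, where 𝒩 and 𝒟 are the numerator and denominator of R₀ = 𝒩/𝒟; in particular, it is strictly positive if R₀ < 1 and strictly negative if R₀ > 1 (given 𝒟, μ > 0). -/
/-!
Columns 0 and 4 of the Jacobian vanish outside rows 0 and 4, so its determinant is the
determinant `a₂ a₅ - mω·φp = μ (pφ + a₂)` of that 2 × 2 block times the determinant of the
complementary 4 × 4 infection block, which is `(𝒟 - 𝒩) / (pφ + a₂)`.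
-/

theorem det_jacobian_shape (a₀ a₁ a₂ a₃ a₄ a₅ a₆ a₇ b c g k l X Y Z : ℝ) :
    (!![-a₅, b, b, l * b, Y, 0;
        0, -(a₀ + b), -b, -(l * b), 0, 0;
        0, X, -a₁, 0, 0, 0;
        0, 0, a₆, -a₃, 0, k;
        Z, 0, c, a₄, -a₂, 0;
        0, 0, 0, g, 0, -a₇] : Matrix (Fin 6) (Fin 6) ℝ).det =
      (a₂ * a₅ - Y * Z) * (a₀ * a₁ * (a₃ * a₇ - g * k)
        + b * ((l * a₆ * X + (a₁ + X) * a₃) * a₇ - g * k * (X + a₁))) := by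
  simp only [neg_add_rev, Matrix.det_succ_row_zero, Nat.succ_eq_add_one, Nat.reduceAdd, Fin.isValue,
    Matrix.of_apply, Matrix.cons_val', Matrix.cons_val_fin_one, Matrix.cons_val_zero,
    Matrix.submatrix_apply, Fin.succ_zero_eq_one, Fin.succAbove, Matrix.cons_val_one,
    Matrix.submatrix_submatrix, Function.comp_apply, Fin.succ_one_eq_two, Matrix.cons_val,
    Fin.reduceSucc, Matrix.det_unique, Fin.default_eq_zero, Fin.castSucc_zero, Fin.sum_univ_succ,
    Fin.coe_ofNat_eq_mod, Nat.zero_mod, pow_zero, one_mul, lt_self_iff_false, ↓reduceIte,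
    Fin.castSucc_one, Finset.univ_unique, Fin.val_succ, Fin.val_eq_zero, zero_add, pow_one,
    Fin.castSucc_succ, neg_mul, Fin.succ_pos, Finset.sum_neg_distrib, Finset.sum_singleton,
    not_lt_zero, Fin.reduceCastSucc, even_two, Even.neg_pow, one_pow, Fin.reduceLT, Fin.lt_one_iff,
    Fin.reduceEq, mul_neg, neg_neg, mul_zero, neg_zero, add_zero, zero_mul, Matrix.cons_val_succ,
    Finset.sum_const_zero]
  ring

theorem sub_mul_sign_of_div {N D μ : ℝ} (hD : 0 < D) (hμ : 0 < μ) :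
    (N / D < 1 → 0 < (D - N) * μ) ∧ (1 < N / D → (D - N) * μ < 0) :=
  ⟨fun h ↦ mul_pos (sub_pos.2 ((div_lt_one hD).1 h)) hμ,
    fun h ↦ mul_neg_of_neg_of_pos (sub_neg.2 ((one_lt_div hD).1 h)) hμ⟩

theorem jacobian_det_sign_general
    (β φ υ δ₁ δ₂ ω μ q p f₁ f₂ m lH : ℝ)
    (hμ : 0 < μ)
    (a₀ a₁ a₂ a₃ a₄ a₅ a₆ a₇ ηk χ 𝒩 𝒟 : ℝ)
    (ha₂ : a₂ = m * ω + μ) (ha₅ : a₅ = p * φ + μ)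
    (hχ : χ = a₃ * a₇ - δ₂ * ηk * f₂)
    (h𝒩 : 𝒩 = β * a₂ * (1 - p)
        * ((lH * a₆ * q * υ + (a₁ + q * υ) * a₃) * a₇
            - δ₂ * ηk * f₂ * (q * υ + a₁)))
    (h𝒟 : 𝒟 = a₀ * a₁ * χ * (p * φ + a₂)) (h𝒟pos : 0 < 𝒟)
    (M : Matrix (Fin 6) (Fin 6) ℝ)
    (hM : M = !![-a₅, a₂ * β * (p - 1) / (φ * p + a₂), a₂ * β * (p - 1) / (φ * p + a₂),
          lH * a₂ * β * (p - 1) / (φ * p + a₂), m * ω, 0;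
        0, -((a₀ * p * φ + a₂ * (β * p + a₀ - β)) / (φ * p + a₂)),
          -(a₂ * β * (p - 1) / (φ * p + a₂)),
          -(lH * a₂ * β * (p - 1) / (φ * p + a₂)), 0, 0;
        0, q * υ, -a₁, 0, 0, 0;
        0, 0, a₆, -a₃, 0, ηk;
        φ * p, 0, δ₁ * f₁, a₄, -a₂, 0;
        0, 0, 0, δ₂ * f₂, 0, -a₇]) :
    M.det = (𝒟 - 𝒩) * μ ∧
    (𝒩 / 𝒟 < 1 → 0 < M.det) ∧
    (1 < 𝒩 / 𝒟 → M.det < 0) := by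
  have hden : φ * p + a₂ ≠ 0 := by
    intro h
    rw [h𝒟, mul_comm p, h, mul_zero] at h𝒟pos
    exact h𝒟pos.false
  have hdiag : (a₀ * p * φ + a₂ * (β * p + a₀ - β)) / (φ * p + a₂)
      = a₀ + a₂ * β * (p - 1) / (φ * p + a₂) := by
    rw [add_div' _ _ _ hden]
    ring
  have hlH : lH * a₂ * β * (p - 1) / (φ * p + a₂)
      = lH * (a₂ * β * (p - 1) / (φ * p + a₂)) := by
    ring
  have hblock : a₂ * a₅ - m * ω * (φ * p) = μ * (φ * p + a₂) := by
    rw [ha₂, ha₅]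
    ring
  have hdet : M.det = (𝒟 - 𝒩) * μ := by
    rw [hM, hdiag, hlH, det_jacobian_shape, hblock, h𝒟, h𝒩, hχ]
    field_simp
    ring
  exact ⟨hdet, hdet ▸ sub_mul_sign_of_div h𝒟pos hμ⟩

theorem jacobian_det_sign
    (β φ υ δ₁ δ₂ η ω α₁ α₂ μ q p f₁ f₂ f₃ κ m lH : ℝ)
    (hβ : 0 < β) (hφ : 0 < φ) (hυ : 0 < υ) (hδ₁ : 0 < δ₁) (hδ₂ : 0 < δ₂)
    (hη : 0 < η) (hω : 0 < ω) (hα₁ : 0 < α₁) (hα₂ : 0 < α₂) (hμ : 0 < μ)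
    (hq : 0 < q) (hp : 0 ≤ p ∧ p ≤ 1)
    (a₀ a₁ a₂ a₃ a₄ a₅ a₆ a₇ ηk χ 𝒩 𝒟 : ℝ)
    (ha₀ : a₀ = q * υ + μ) (ha₁ : a₁ = δ₁ + μ) (ha₂ : a₂ = m * ω + μ)
    (ha₃ : a₃ = δ₂ * (1 - f₂ - f₃) + δ₂ * f₂ + α₁ * f₃ + μ)
    (ha₄ : a₄ = δ₂ * (1 - f₂ - f₃)) (ha₅ : a₅ = p * φ + μ)
    (ha₆ : a₆ = δ₁ * (1 - f₁)) (ha₇ : a₇ = η * (1 - κ) + α₂ * κ + μ)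
    (hηk : ηk = η * (1 - κ)) (hχ : χ = a₃ * a₇ - δ₂ * ηk * f₂)
    (h𝒩 : 𝒩 = β * a₂ * (1 - p)
        * ((lH * a₆ * q * υ + (a₁ + q * υ) * a₃) * a₇
            - δ₂ * ηk * f₂ * (q * υ + a₁)))
    (h𝒟 : 𝒟 = a₀ * a₁ * χ * (p * φ + a₂)) (h𝒟pos : 0 < 𝒟)
    (M : Matrix (Fin 6) (Fin 6) ℝ)
    (hM : M = !![-a₅, a₂ * β * (p - 1) / (φ * p + a₂), a₂ * β * (p - 1) / (φ * p + a₂),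
          lH * a₂ * β * (p - 1) / (φ * p + a₂), m * ω, 0;
        0, -((a₀ * p * φ + a₂ * (β * p + a₀ - β)) / (φ * p + a₂)),
          -(a₂ * β * (p - 1) / (φ * p + a₂)),
          -(lH * a₂ * β * (p - 1) / (φ * p + a₂)), 0, 0;
        0, q * υ, -a₁, 0, 0, 0;
        0, 0, a₆, -a₃, 0, ηk;
        φ * p, 0, δ₁ * f₁, a₄, -a₂, 0;
        0, 0, 0, δ₂ * f₂, 0, -a₇]) :
    M.det = (𝒟 - 𝒩) * μ ∧
    (𝒩 / 𝒟 < 1 → 0 < M.det) ∧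
    (1 < 𝒩 / 𝒟 → M.det < 0) :=
  jacobian_det_sign_general β φ υ δ₁ δ₂ ω μ q p f₁ f₂ m lH hμ a₀ a₁ a₂ a₃ a₄ a₅ a₆ a₇ ηk χ 𝒩 𝒟 ha₂
    ha₅ hχ h𝒩 h𝒟 h𝒟pos M hM
end

section
/- The endemic force of infection λ* = (𝒩 - 𝒟)β(1-p) / (𝒩 + qυ(a₂a₆(a₇(1-l_H)+δ₂f₂) + δ₁f₁χ + a₄a₆a₇)β(1-p)) is strictly positive if and only if R₀ = 𝒩/𝒟 > 1, assuming β > 0, 0 ≤ p < 1, 0 < l_H ≤ 1, all a_i > 0, χ > 0, 𝒟 > 0. -/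
theorem endemic_force_of_infection_positive_iff
    (β p lH q υ δ₁ δ₂ f₁ f₂ : ℝ)
    (a₀ a₁ a₂ a₃ a₄ a₆ a₇ χ 𝒩 𝒟 lamStar : ℝ)
    (hβ : 0 < β) (hp : 0 ≤ p ∧ p < 1) (hlH : 0 < lH ∧ lH ≤ 1)
    (ha₀ : 0 < a₀) (ha₁ : 0 < a₁) (ha₂ : 0 < a₂) (ha₃ : 0 < a₃)
    (ha₄ : 0 < a₄) (ha₆ : 0 < a₆) (ha₇ : 0 < a₇) (hχ : 0 < χ)
    (h𝒟 : 0 < 𝒟) (h𝒩 : 0 < 𝒩)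
    (hq : 0 < q) (hυ : 0 < υ) (hδ₁ : 0 < δ₁) (hδ₂ : 0 < δ₂)
    (hf₁ : 0 ≤ f₁) (hf₂ : 0 ≤ f₂)
    (hlamStar : lamStar = (𝒩 - 𝒟) * β * (1 - p)
        / (𝒩 + q * υ * (a₂ * a₆ * (a₇ * (1 - lH) + δ₂ * f₂)
            + δ₁ * f₁ * χ + a₄ * a₆ * a₇) * β * (1 - p))) :
    0 < lamStar ↔ 1 < 𝒩 / 𝒟 := by
  obtain ⟨hp0, hp1⟩ := hp
  obtain ⟨hlH0, hlH1⟩ := hlH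
  have h1p : 0 < 1 - p := by linarith
  have hterm : 0 ≤ q * υ * (a₂ * a₆ * (a₇ * (1 - lH) + δ₂ * f₂)
      + δ₁ * f₁ * χ + a₄ * a₆ * a₇) * β * (1 - p) := by
    have h1 : 0 ≤ a₇ * (1 - lH) := mul_nonneg ha₇.le (by linarith)
    have h2 : 0 ≤ δ₂ * f₂ := mul_nonneg hδ₂.le hf₂
    have h3 : 0 ≤ δ₁ * f₁ * χ := mul_nonneg (mul_nonneg hδ₁.le hf₁) hχ.le
    positivity
  have hden : 0 < 𝒩 + q * υ * (a₂ * a₆ * (a₇ * (1 - lH) + δ₂ * f₂)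
      + δ₁ * f₁ * χ + a₄ * a₆ * a₇) * β * (1 - p) := by linarith
  rw [hlamStar, div_pos_iff]
  rw [one_lt_div h𝒟]
  constructor
  · rintro (⟨hnum, _⟩ | ⟨_, hd⟩)
    · nlinarith [mul_pos hβ h1p, hnum]
    · linarith
  · intro h
    left
    refine ⟨?_, hden⟩
    have := mul_pos (mul_pos (sub_pos.mpr h) hβ) h1p
    linarith
end
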